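/- (Equidistribution of atoms.) Given ε > 0, let B be a polynomial factor defined by non-classical polynomials P_1,...,P_C : F_p^n → ℝ/ℤ of degree ≤ d and depths k_1,...,k_C, whose rank exceeds r(d,ε), where r(d,ε) is such that any degree-d non-classical polynomial of rank > r(d,ε) has |E_x[e(P(x))]| < ε. Then for any b = (b_1,...,b_C) ∈ U_{k_1+1} × ··· × U_{k_C+1}, Pr_x[(P_1(x),...,P_C(x)) = b] = 1/‖B‖ ± ε, where ‖B‖ = ∏_{i=1}^C p^{k_i+1}. -/

import Mathlib

open scoped BigOperators

noncomputable section

/-- The circle group `𝕋 = ℝ/ℤ`. -/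
abbrev 𝕋 : Type := AddCircle (1 : ℝ)

/-- The character `e(x) = e^{2πix}` on `𝕋`, valued in `ℂ`. -/
def ee (x : 𝕋) : ℂ := (AddCircle.toCircle x : ℂ)

/-- The average `E_{x ∈ α}[f(x)]` of a complex-valued function on a finite type. -/
def cavg {α : Type*} [Fintype α] (f : α → ℂ) : ℂ := (∑ x, f x) / (Fintype.card α : ℂ)

/-- The average of a real-valued function on a finite type. -/
def ravg {α : Type*} [Fintype α] (f : α → ℝ) : ℝ := (∑ x, f x) / (Fintype.card α : ℝ)

/-- Multiplicative derivative `Δ_h f (x) = f(x+h) conj (f x)`. -/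
def mDeriv {G : Type*} [Add G] (h : G) (f : G → ℂ) : G → ℂ :=
  fun x => f (x + h) * (starRingEnd ℂ) (f x)

/-- `E_{h_1,…,h_d,x}[(Δ_{h_1} ⋯ Δ_{h_d} f)(x)]`. -/
def gowersAvg {G : Type*} [AddCommGroup G] [Fintype G] : ℕ → (G → ℂ) → ℂ
  | 0, f => cavg f
  | d + 1, f => cavg fun h => gowersAvg d (mDeriv h f)

/-- The Gowers norm `‖f‖_{U^d} = |E_{h_1,…,h_d,x}[(Δ_{h_1} ⋯ Δ_{h_d} f)(x)]|^{1/2^d}`. -/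
def gowersNorm {G : Type*} [AddCommGroup G] [Fintype G] (d : ℕ) (f : G → ℂ) : ℝ :=
  ‖gowersAvg d f‖ ^ ((1 : ℝ) / 2 ^ d)

/-- Additive derivative `D_h P (x) = P(x+h) - P(x)`. -/
def aDeriv {G M : Type*} [Add G] [Sub M] (h : G) (P : G → M) : G → M :=
  fun x => P (x + h) - P x

/-- Iterated additive derivative `D_{h_1} ⋯ D_{h_k} P`. -/
def iterADeriv {G M : Type*} [AddCommGroup G] [AddCommGroup M] :
    {k : ℕ} → (Fin k → G) → (G → M) → (G → M)
  | 0, _, P => P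
  | _ + 1, h, P => aDeriv (h 0) (iterADeriv (Fin.tail h) P)

/-- `P` is a (non-classical) polynomial of degree ≤ `d`:
all `(d+1)`-fold additive derivatives vanish identically. -/
def IsPolyDeg {G M : Type*} [AddCommGroup G] [AddCommGroup M] (d : ℕ) (P : G → M) : Prop :=
  ∀ (h : Fin (d + 1) → G) (x : G), iterADeriv h P x = 0

/-- `P` has degree exactly `d`. -/
def ExactDeg {G M : Type*} [AddCommGroup G] [AddCommGroup M] (d : ℕ) (P : G → M) : Prop :=
  IsPolyDeg d P ∧ ∀ d' < d, ¬ IsPolyDeg d' P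

/-- The degree of a polynomial: the least `d` with `IsPolyDeg d P`. -/
def polyDeg {G M : Type*} [AddCommGroup G] [AddCommGroup M] (P : G → M) : ℕ :=
  sInf {d | IsPolyDeg d P}

/-- `P` has `d`-rank at most `r`: `P = Γ(Q_1,…,Q_r)` with the `Q_i` of degree ≤ `d-1`. -/
def HasRankLE {G : Type*} [AddCommGroup G] (d : ℕ) (P : G → 𝕋) (r : ℕ) : Prop :=
  ∃ (Q : Fin r → G → 𝕋) (Γ : (Fin r → 𝕋) → 𝕋),
    (∀ i, IsPolyDeg (d - 1) (Q i)) ∧ ∀ x, P x = Γ fun i => Q i x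

/-- The `d`-rank of `P`, in `ℕ∞` (`⊤` if no finite decomposition exists;
for `d = 1` this is `⊤` exactly when `P` is non-constant). -/
def rankd {G : Type*} [AddCommGroup G] (d : ℕ) (P : G → 𝕋) : ℕ∞ :=
  sInf {r : ℕ∞ | ∃ m : ℕ, r = m ∧ HasRankLE d P m}

/-- `P` has depth exactly `k` (shift zero): values in `U_{k+1} = (1/p^{k+1})ℤ/ℤ` but not all
in `U_k`. -/
def ExactDepth {G : Type*} (p k : ℕ) (P : G → 𝕋) : Prop :=
  (∀ x, (p ^ (k + 1)) • P x = 0) ∧ ¬ (∀ x, (p ^ k) • P x = 0)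

/-- Application of a linear form `L = (w_t)_t` to a tuple of points of `F_p^n`:
`(x_t)_t ↦ ∑_t w_t x_t`. -/
def formApply {p : ℕ} {ι : Type*} [Fintype ι] {n : ℕ} (L : ι → ZMod p)
    (x : ι → Fin n → ZMod p) : Fin n → ZMod p := ∑ t, L t • x t

/-- The `(d,k)`-dependency set of a system of forms `L`: the tuples
`(λ_j) ∈ [0, p^{k+1}-1]^m` with `∑_j λ_j P(L_j(x)) ≡ 0` for every non-classical polynomial `P`
of degree `d` and depth `k` (over every `F_p^n`). -/
def DepSet (p k d : ℕ) {ι μ : Type*} [Fintype ι] [Fintype μ]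
    (L : μ → ι → ZMod p) : Set (μ → ℕ) :=
  {lam | (∀ j, lam j < p ^ (k + 1)) ∧
    ∀ (n : ℕ) (P : (Fin n → ZMod p) → 𝕋), ExactDeg d P → ExactDepth p k P →
      ∀ x : ι → Fin n → ZMod p, (∑ j, lam j • P (formApply (L j) x)) = 0}

/-- `b_1,…,b_m ∈ 𝕋^κ` are consistent with the forms `L` with respect to degree data `dd`
and depth data `kk`. -/
def ConsistentWith (p : ℕ) {ι κ : Type*} [Fintype ι] [Fintype κ] {m : ℕ}
    (L : Fin m → ι → ZMod p) (dd kk : κ → ℕ) (b : Fin m → κ → 𝕋) : Prop :=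
  ∀ i : κ, (∀ j, (p ^ (kk i + 1)) • b j i = 0) ∧
    ∀ lam ∈ DepSet p (kk i) (dd i) L, (∑ j, lam j • b j i) = 0

/-- The polynomial factor defined by `P_1,…,P_C` with depths `k_1,…,k_C` has rank greater
than `r`: every integer combination `∑ λ_i P_i`, with the `λ_i` not all divisible by the
respective `p^{k_i+1}`, has `D`-rank > `r` where `D = max_i deg(λ_i P_i)`. -/
def FactorRankGT (p : ℕ) {G : Type*} [AddCommGroup G] {C : ℕ}
    (P : Fin C → G → 𝕋) (k : Fin C → ℕ) (r : ℕ) : Prop :=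
  ∀ lam : Fin C → ℤ, (∃ i, ¬ ((p : ℤ) ^ (k i + 1) ∣ lam i)) →
    (r : ℕ∞) < rankd (Finset.univ.sup fun i => polyDeg fun x => lam i • P i x)
      (fun x => ∑ i, lam i • P i x)

/-- Cauchy–Schwarz complexity ≤ `d`: for each `i`, the remaining forms can be partitioned into
`d+1` classes, with `L_i` outside the linear span of each class. -/
def CSComplexityLE (p : ℕ) {m : ℕ} {ι : Type*} [Fintype ι] (d : ℕ)
    (L : Fin m → ι → ZMod p) : Prop :=
  ∀ i, ∃ c : Fin m → Fin (d + 1), ∀ t,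
    L i ∉ Submodule.span (ZMod p) {v | ∃ j, j ≠ i ∧ c j = t ∧ v = L j}


/-! Expanding the indicator of the atom `{x | P(x) = b}` in characters of
`∏ᵢ ℤ/p^{kᵢ+1}ℤ` gives `‖B‖ · #atom = ∑_λ ∑_x e(∑ᵢ λᵢ (Pᵢ(x) - bᵢ))`. The term `λ = 0` is
`|F_p^n|`, the main term. For `λ ≠ 0` the rank hypothesis makes `∑ᵢ λᵢ Pᵢ` a polynomial of rank
`> r(d, ε)`, so its bias, which is the size of the `λ`-term up to the unimodular factor
`e(-∑ᵢ λᵢ bᵢ)`, is below `ε`; the `‖B‖ - 1` error terms then change the density by at most `ε`. -/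

section Character

lemma ee_add (x y : 𝕋) : ee (x + y) = ee x * ee y := by
  simp [ee, AddCircle.toCircle_add]

lemma ee_zero : ee 0 = 1 := by
  simp [ee]

lemma norm_ee (x : 𝕋) : ‖ee x‖ = 1 :=
  Circle.norm_coe _

lemma ee_nsmul (m : ℕ) (x : 𝕋) : ee (m • x) = ee x ^ m := by
  simp [ee, AddCircle.toCircle_nsmul]

lemma ee_eq_one_iff {x : 𝕋} : ee x = 1 ↔ x = 0 := by
  rw [← ee_zero, ee, ee, Circle.coe_inj, (AddCircle.injective_toCircle one_ne_zero).eq_iff]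

lemma ee_sum {ι : Type*} (s : Finset ι) (f : ι → 𝕋) : ee (∑ i ∈ s, f i) = ∏ i ∈ s, ee (f i) := by
  classical
  induction s using Finset.induction_on with
  | empty => simp [ee_zero]
  | insert i s hi ih => rw [Finset.sum_insert hi, Finset.prod_insert hi, ee_add, ih]

lemma sum_range_ee_nsmul {N : ℕ} {t : 𝕋} (ht : N • t = 0) :
    ∑ l ∈ Finset.range N, ee (l • t) = if t = 0 then (N : ℂ) else 0 := by
  simp_rw [ee_nsmul]
  split_ifs with h
  · simp [h, ee_zero]
  · have hpow : ee t ^ N = 1 := by rw [← ee_nsmul, ht, ee_zero]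
    rw [geom_sum_eq (mt ee_eq_one_iff.mp h), hpow, sub_self, zero_div]

lemma sum_piFinset_ee {ι : Type*} [Fintype ι] [DecidableEq ι] (N : ι → ℕ) {a : ι → 𝕋}
    (ha : ∀ i, N i • a i = 0) :
    ∑ lam ∈ Fintype.piFinset (fun i => Finset.range (N i)), ee (∑ i, lam i • a i) =
      if a = 0 then ∏ i, (N i : ℂ) else 0 := by
  simp_rw [ee_sum]
  rw [← Finset.prod_univ_sum (fun i => Finset.range (N i)) fun i l => ee (l • a i)]
  simp only [sum_range_ee_nsmul (ha _), Finset.prod_ite_zero, Finset.mem_univ, true_implies,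
    funext_iff, Pi.zero_apply]

end Character

section Polynomial

variable {G M : Type*} [AddCommGroup G] [AddCommGroup M]

lemma iterADeriv_add {k : ℕ} (h : Fin k → G) (P Q : G → M) :
    iterADeriv h (P + Q) = iterADeriv h P + iterADeriv h Q := by
  induction k with
  | zero => rfl
  | succ k ih =>
    show aDeriv (h 0) (iterADeriv (Fin.tail h) (P + Q)) = _
    rw [ih]
    funext x
    simp only [aDeriv, iterADeriv, Pi.add_apply]
    abel

variable (G M) in
def iterADerivHom {k : ℕ} (h : Fin k → G) : (G → M) →+ (G → M) :=
  AddMonoidHom.mk' (iterADeriv h) (iterADeriv_add h)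

variable (G M) in
def polyDegLE (d : ℕ) : AddSubgroup (G → M) :=
  ⨅ h : Fin (d + 1) → G, (iterADerivHom G M h).ker

lemma mem_polyDegLE {d : ℕ} {P : G → M} : P ∈ polyDegLE G M d ↔ IsPolyDeg d P := by
  simp [polyDegLE, AddSubgroup.mem_iInf, iterADerivHom, funext_iff, IsPolyDeg]

lemma IsPolyDeg.sum {d : ℕ} {ι : Type*} {s : Finset ι} {P : ι → G → M}
    (hP : ∀ i ∈ s, IsPolyDeg d (P i)) : IsPolyDeg d fun x => ∑ i ∈ s, P i x := by
  have hsum : (fun x => ∑ i ∈ s, P i x) = ∑ i ∈ s, P i := by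
    funext x; simp [Finset.sum_apply]
  rw [← mem_polyDegLE, hsum]
  exact AddSubgroup.sum_mem _ fun i hi => mem_polyDegLE.mpr (hP i hi)

lemma IsPolyDeg.zsmul {d : ℕ} {P : G → M} (a : ℤ) (hP : IsPolyDeg d P) :
    IsPolyDeg d fun x => a • P x :=
  mem_polyDegLE.mp (AddSubgroup.zsmul_mem _ (mem_polyDegLE.mpr hP) a)

lemma IsPolyDeg.succ {d : ℕ} {P : G → M} (hP : IsPolyDeg d P) : IsPolyDeg (d + 1) P := by
  intro h x
  show iterADeriv (Fin.tail h) P (x + h 0) - iterADeriv (Fin.tail h) P x = 0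
  rw [hP, hP, sub_self]

lemma IsPolyDeg.mono {d d' : ℕ} (hdd : d ≤ d') {P : G → M} (hP : IsPolyDeg d P) :
    IsPolyDeg d' P := by
  induction d', hdd using Nat.le_induction with
  | base => exact hP
  | succ d' _ ih => exact ih.succ

lemma polyDeg_le {d : ℕ} {P : G → M} (hP : IsPolyDeg d P) : polyDeg P ≤ d :=
  Nat.sInf_le hP

lemma IsPolyDeg.isPolyDeg_polyDeg {d : ℕ} {P : G → M} (hP : IsPolyDeg d P) :
    IsPolyDeg (polyDeg P) P :=
  Nat.sInf_mem (s := {d | IsPolyDeg d P}) ⟨d, hP⟩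

lemma rankd_anti {d d' : ℕ} (hdd : d ≤ d') (P : G → 𝕋) : rankd d' P ≤ rankd d P := by
  refine sInf_le_sInf ?_
  rintro r ⟨m, rfl, Q, Γ, hQ, hPQ⟩
  exact ⟨m, rfl, Q, Γ, fun i => (hQ i).mono (Nat.sub_le_sub_right hdd 1), hPQ⟩

/-- Passing from `D = maxᵢ deg(λᵢ Pᵢ)` to the true degree of `∑ᵢ λᵢ Pᵢ`, which can only be
smaller, can only increase the rank. -/
lemma FactorRankGT.lt_rankd_polyDeg {p C d r : ℕ} {P : Fin C → G → 𝕋} {k : Fin C → ℕ}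
    (hrank : FactorRankGT p P k r) (hdeg : ∀ i, IsPolyDeg d (P i)) {lam : Fin C → ℤ}
    (hlam : ∃ i, ¬ (p : ℤ) ^ (k i + 1) ∣ lam i) :
    (r : ℕ∞) < rankd (polyDeg fun x => ∑ i, lam i • P i x) fun x => ∑ i, lam i • P i x := by
  refine (hrank lam hlam).trans_le (rankd_anti (polyDeg_le ?_) _)
  exact IsPolyDeg.sum fun i _ => (((hdeg i).zsmul (lam i)).isPolyDeg_polyDeg).mono
      (Finset.le_sup (f := fun i => polyDeg fun x => lam i • P i x) (Finset.mem_univ i))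

end Polynomial

section Counting

variable {X ι : Type*} [Fintype X] [Fintype ι] [DecidableEq ι]

lemma sum_piFinset_sum_ee_eq_card_mul (N : ι → ℕ) (f : X → ι → 𝕋) (b : ι → 𝕋)
    (hf : ∀ x i, N i • f x i = 0) (hb : ∀ i, N i • b i = 0) :
    ∑ lam ∈ Fintype.piFinset (fun i => Finset.range (N i)),
        ∑ x, ee (∑ i, lam i • (f x i - b i)) =
      Nat.card {x // ∀ i, f x i = b i} * ∏ i, (N i : ℂ) := by
  classical
  rw [Finset.sum_comm, Finset.sum_congr rfl fun x _ => sum_piFinset_ee N (a := fun i => f x i - b i)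
    fun i => by rw [smul_sub, hf, hb, sub_zero]]
  simp only [funext_iff, Pi.zero_apply, sub_eq_zero]
  rw [Finset.sum_ite, Finset.sum_const_zero, add_zero, Finset.sum_const, nsmul_eq_mul,
    Nat.card_eq_fintype_card, Fintype.card_subtype]

lemma norm_sum_ee_sub (g : X → 𝕋) (c : 𝕋) : ‖∑ x, ee (g x - c)‖ = ‖∑ x, ee (g x)‖ := by
  simp_rw [sub_eq_add_neg, ee_add]
  rw [← Finset.sum_mul, norm_mul, norm_ee, mul_one]

theorem abs_card_fiber_div_sub_le [Nonempty X] (N : ι → ℕ) (hN : ∀ i, 0 < N i)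
    (f : X → ι → 𝕋) (b : ι → 𝕋) (hf : ∀ x i, N i • f x i = 0) (hb : ∀ i, N i • b i = 0)
    {ε : ℝ} (hε : 0 ≤ ε)
    (hbias : ∀ lam ∈ Fintype.piFinset (fun i => Finset.range (N i)), lam ≠ 0 →
      ‖cavg fun x => ee (∑ i, lam i • f x i)‖ ≤ ε) :
    |(Nat.card {x // ∀ i, f x i = b i} : ℝ) / Fintype.card X - 1 / ∏ i, (N i : ℝ)| ≤ ε := by
  set Λ := Fintype.piFinset fun i => Finset.range (N i)
  set S : (ι → ℕ) → ℂ := fun lam => ∑ x, ee (∑ i, lam i • (f x i - b i))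
  set c := Nat.card {x // ∀ i, f x i = b i}
  set q := Fintype.card X
  set B := ∏ i, N i
  have hq : (0 : ℝ) < q := by exact_mod_cast Fintype.card_pos
  have hB : (0 : ℝ) < B := by exact_mod_cast Finset.prod_pos fun i _ => hN i
  have hzero : 0 ∈ Λ := Fintype.mem_piFinset.mpr fun i => Finset.mem_range.mpr (hN i)
  have hS0 : S 0 = q := by simp [S, ee_zero, q]
  have hSlam : ∀ lam ∈ Λ.erase 0, ‖S lam‖ ≤ ε * q := fun lam hlam => by
    obtain ⟨hne, hmem⟩ := Finset.mem_erase.mp hlam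
    have hcavg := hbias lam hmem hne
    rw [cavg, norm_div, Complex.norm_natCast, div_le_iff₀ hq] at hcavg
    simpa only [S, smul_sub, Finset.sum_sub_distrib, norm_sum_ee_sub] using hcavg
  have hsum : (c : ℂ) * B - q = ∑ lam ∈ Λ.erase 0, S lam := by
    rw [← hS0, Finset.sum_erase_eq_sub hzero, sum_piFinset_sum_ee_eq_card_mul N f b hf hb]
    push_cast [B]
    rfl
  have hmain : |(c : ℝ) * B - q| ≤ ε * (B * q) :=
    calc |(c : ℝ) * B - q| = ‖(c : ℂ) * B - q‖ := by
          rw [← Real.norm_eq_abs, ← Complex.norm_real]; push_cast; rfl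
      _ ≤ (Λ.erase 0).card • (ε * q) := by
          rw [hsum]; exact (norm_sum_le _ _).trans (Finset.sum_le_card_nsmul _ _ _ hSlam)
      _ ≤ B * (ε * q) := by
          rw [nsmul_eq_mul]
          gcongr
          exact_mod_cast Finset.card_erase_le.trans_eq (by simp [Λ, B])
      _ = ε * (B * q) := by ring
  rw [show ∏ i, (N i : ℝ) = B by push_cast [B]; rfl, div_sub_div _ _ hq.ne' hB.ne', mul_one,
    abs_div, abs_of_pos (mul_pos hq hB), div_le_iff₀ (mul_pos hq hB), mul_comm (q : ℝ) B]
  exact hmain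

end Counting

/-- Equidistribution of atoms: if the factor `(P_1,…,P_C)` of degree ≤ d and
depths `k_i` has rank > `rε`, where `rε` has the bias-implies-low-rank property, then every
atom `b` with `b_i ∈ U_{k_i+1}` satisfies `Pr_x[(P_i(x)) = b] = 1/‖B‖ ± ε`. -/
theorem atom_equidistribution (p : ℕ) [Fact p.Prime] (n C d : ℕ)
    (ε : ℝ) (hε : 0 < ε) (rε : ℕ)
    (P : Fin C → (Fin n → ZMod p) → 𝕋) (k : Fin C → ℕ)
    (hdeg : ∀ i, IsPolyDeg d (P i))
    (hdepth : ∀ i x, (p ^ (k i + 1)) • P i x = 0)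
    (hbias : ∀ Q : (Fin n → ZMod p) → 𝕋, IsPolyDeg d Q →
      (rε : ℕ∞) < rankd (polyDeg Q) Q →
      ‖cavg fun x => ee (Q x)‖ < ε)
    (hrank : FactorRankGT p P k rε)
    (b : Fin C → 𝕋) (hb : ∀ i, (p ^ (k i + 1)) • b i = 0) :
    |(Nat.card {x : Fin n → ZMod p // ∀ i, P i x = b i} : ℝ) /
        (Fintype.card (Fin n → ZMod p) : ℝ)
      - 1 / ∏ i, (p : ℝ) ^ (k i + 1)| ≤ ε := by
  have hp : 0 < p := (Fact.out : p.Prime).pos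
  have hnorm : ∏ i, (p : ℝ) ^ (k i + 1) = ∏ i, ((p ^ (k i + 1) : ℕ) : ℝ) := by push_cast; rfl
  rw [hnorm]
  refine abs_card_fiber_div_sub_le (fun i => p ^ (k i + 1)) (fun i => pow_pos hp _)
    (fun x i => P i x) b (fun x i => hdepth i x) hb hε.le fun lam hlam hne => ?_
  obtain ⟨i, hi⟩ := Function.ne_iff.mp hne
  have hlt : lam i < p ^ (k i + 1) := Finset.mem_range.mp (Fintype.mem_piFinset.mp hlam i)
  have hndvd : ¬ (p : ℤ) ^ (k i + 1) ∣ (lam i : ℤ) := fun hdvd => by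
    have := Int.le_of_dvd (by exact_mod_cast Nat.pos_of_ne_zero hi) hdvd
    exact_mod_cast this.not_gt (by exact_mod_cast hlt)
  have hQ := hbias _ (IsPolyDeg.sum fun i _ => (hdeg i).zsmul (lam i : ℤ))
    (hrank.lt_rankd_polyDeg hdeg ⟨i, hndvd⟩)
  simpa only [natCast_zsmul] using hQ.le

end
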